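/- Let A and B be arbitrary real 2×2 matrices. Then ρ(AABABABB)^(1/8) ≤ max{ρ(AB)^(1/2), ρ(AABB)^(1/4), ρ(AABABBAB)^(1/8)}. In particular, the product AABABABB never delivers a strict maximum of the normalized spectral radius among all products of the matrices A and B of length at most 8. -/

import Mathlib

open Matrix
open scoped ENNReal

/-- The spectral radius of a real 2×2 matrix: the maximum of the moduli of its
complex eigenvalues, obtained by viewing the matrix as a complex matrix. -/
noncomputable def rho (A : Matrix (Fin 2) (Fin 2) ℝ) : ℝ≥0∞ :=
  spectralRadius ℂ (A.map (Complex.ofReal))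

/-!
All four words `AABABABB`, `(AB)⁴`, `(AABB)²` and `AABABBAB` have determinant `(det A det B)⁴`,
and the spectral radius of a real 2×2 matrix is a function of its trace and determinant that is
nondecreasing in the absolute value of the trace. Writing the traces in terms of
`t = tr(AB)`, `s = tr(AABB)` and `d = det A det B` gives the identity
`2 tr(AABABABB)² = tr(AABABBAB)² + tr((AB)⁴) tr((AABB)²)`, so `|tr(AABABABB)|` is at most the
largest of the other three absolute traces. Hence
`ρ(AABABABB) ≤ max(ρ(AB)⁴, ρ(AABB)², ρ(AABABBAB))`, and taking eighth roots gives the claim.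
-/

theorem spectralRadius_pow_of_pos {𝕜 A : Type*} [NormedField 𝕜] [IsAlgClosed 𝕜] [Ring A]
    [Algebra 𝕜 A] (a : A) {n : ℕ} (hn : 0 < n) :
    spectralRadius 𝕜 (a ^ n) = spectralRadius 𝕜 a ^ n := by
  refine le_antisymm ?_ (spectrum.spectralRadius_pow_le a n hn.ne')
  rw [spectralRadius, spectrum.map_pow_of_pos a hn]
  refine iSup₂_le ?_
  rintro _ ⟨k, hk, rfl⟩
  rw [nnnorm_pow, ENNReal.coe_pow]
  exact pow_le_pow_left₀ zero_le (le_iSup₂ (f := fun k _ => (‖k‖₊ : ℝ≥0∞)) k hk) n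

theorem Matrix.mem_spectrum_iff_fin_two {K : Type*} [Field K] (M : Matrix (Fin 2) (Fin 2) K)
    (z : K) : z ∈ spectrum K M ↔ z ^ 2 - M.trace * z + M.det = 0 := by
  simp [mem_spectrum_iff_isRoot_charpoly, charpoly_fin_two]

theorem Matrix.trace_sq_fin_two {R : Type*} [CommRing R] (M : Matrix (Fin 2) (Fin 2) R) :
    trace (M ^ 2) = trace M ^ 2 - 2 * det M := by
  simp only [sq, trace_fin_two, det_fin_two, mul_apply, Fin.sum_univ_two]
  ring

theorem Matrix.two_mul_trace_sq_AABABABB {R : Type*} [CommRing R] (A B : Matrix (Fin 2) (Fin 2) R) :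
    2 * trace (A * A * B * A * B * A * B * B) ^ 2 =
      trace (A * A * B * A * B * B * A * B) ^ 2 +
        trace ((A * B) ^ 4) * trace ((A * A * B * B) ^ 2) := by
  set t := trace (A * B)
  set s := trace (A * A * B * B)
  set d := det A * det B
  have h₁ : trace (A * A * B * A * B * A * B * B) = (t ^ 2 - d) * s - t ^ 2 * d := by
    simp only [t, s, d, trace_fin_two, det_fin_two, mul_apply, Fin.sum_univ_two]
    ring
  have h₂ : trace (A * A * B * A * B * B * A * B) = t ^ 2 * s - 2 * t ^ 2 * d + 2 * d ^ 2 := by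
    simp only [t, s, d, trace_fin_two, det_fin_two, mul_apply, Fin.sum_univ_two]
    ring
  have h₃ : trace ((A * B) ^ 4) = (t ^ 2 - 2 * d) ^ 2 - 2 * d ^ 2 := by
    rw [show 4 = 2 * 2 from rfl, pow_mul, trace_sq_fin_two, trace_sq_fin_two, det_pow, det_mul]
  have h₄ : trace ((A * A * B * B) ^ 2) = s ^ 2 - 2 * d ^ 2 := by
    rw [trace_sq_fin_two]
    simp only [det_mul]
    ring
  rw [h₁, h₂, h₃, h₄]
  ring

theorem max_abs_add_abs_sub (a : ℝ) {b : ℝ} (hb : 0 ≤ b) : max |a + b| |a - b| = |a| + b := by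
  rcases abs_cases a with ⟨ha, _⟩ | ⟨ha, _⟩ <;>
    rcases abs_cases (a + b) with ⟨h₁, _⟩ | ⟨h₁, _⟩ <;>
    rcases abs_cases (a - b) with ⟨h₂, _⟩ | ⟨h₂, _⟩ <;>
    rw [max_def] <;> split_ifs <;> linarith

theorem abs_le_max_of_two_mul_sq_eq {x y a b : ℝ} (h : 2 * x ^ 2 = y ^ 2 + a * b) :
    |x| ≤ max |a| (max |b| |y|) := by
  by_contra! hlt
  simp only [max_lt_iff] at hlt
  obtain ⟨ha, hb, hy⟩ := hlt
  have hab : a * b < x ^ 2 :=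
    calc a * b ≤ |a| * |b| := by rw [← abs_mul]; exact le_abs_self _
      _ < |x| * |x| := mul_lt_mul'' ha hb (abs_nonneg _) (abs_nonneg _)
      _ = x ^ 2 := by rw [← sq, sq_abs]
  have hy2 : y ^ 2 < x ^ 2 := sq_lt_sq.mpr hy
  linarith

/-- The largest modulus of a root of `z ^ 2 - τ * z + δ`. -/
noncomputable def rootRadius (τ δ : ℝ) : ℝ :=
  if 4 * δ ≤ τ ^ 2 then (|τ| + √(τ ^ 2 - 4 * δ)) / 2 else √δ

theorem exists_roots_max_norm_eq_rootRadius (τ δ : ℝ) :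
    ∃ z₁ z₂ : ℂ, z₁ + z₂ = τ ∧ z₁ * z₂ = δ ∧ max ‖z₁‖ ‖z₂‖ = rootRadius τ δ := by
  rw [rootRadius]
  split_ifs with h
  · set e := √(τ ^ 2 - 4 * δ)
    have he : e ^ 2 = τ ^ 2 - 4 * δ := Real.sq_sqrt (by linarith)
    refine ⟨((τ + e) / 2 : ℝ), ((τ - e) / 2 : ℝ), by push_cast; ring,
      by norm_cast; linear_combination -he / 4, ?_⟩
    rw [Complex.norm_real, Complex.norm_real, Real.norm_eq_abs, Real.norm_eq_abs,
      abs_div, abs_div, abs_two, max_div_div_right zero_le_two,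
      max_abs_add_abs_sub τ (Real.sqrt_nonneg _)]
  · set e := √(4 * δ - τ ^ 2)
    have he : e ^ 2 = 4 * δ - τ ^ 2 := Real.sq_sqrt (by linarith)
    have hnorm (s : ℝ) (hs : s ^ 2 = 1) : ‖(⟨τ / 2, s * e / 2⟩ : ℂ)‖ = √δ := by
      rw [Complex.norm_def, Complex.normSq_mk]
      congr 1
      linear_combination e ^ 2 / 4 * hs + he / 4
    refine ⟨⟨τ / 2, 1 * e / 2⟩, ⟨τ / 2, -1 * e / 2⟩, by apply Complex.ext <;> simp; ring, ?_, ?_⟩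
    · apply Complex.ext
      · simp only [Complex.mul_re, Complex.ofReal_re]
        linear_combination he / 4
      · simp only [Complex.mul_im, Complex.ofReal_im]
        ring
    · rw [hnorm 1 (by norm_num), hnorm (-1) (by norm_num), max_self]

theorem sqrt_le_rootRadius (τ δ : ℝ) : √δ ≤ rootRadius τ δ := by
  rw [rootRadius]
  split_ifs with h
  · have : √δ ≤ |τ| / 2 := by
      rw [Real.sqrt_le_left (by positivity), div_pow, sq_abs]
      linarith
    linarith [Real.sqrt_nonneg (τ ^ 2 - 4 * δ)]
  · rfl

theorem rootRadius_le_rootRadius {τ₁ τ₂ : ℝ} (δ : ℝ) (h : |τ₁| ≤ |τ₂|) :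
    rootRadius τ₁ δ ≤ rootRadius τ₂ δ := by
  have hsq : τ₁ ^ 2 ≤ τ₂ ^ 2 := sq_le_sq.mpr h
  by_cases h₁ : 4 * δ ≤ τ₁ ^ 2
  · have h₂ : 4 * δ ≤ τ₂ ^ 2 := h₁.trans hsq
    rw [rootRadius, if_pos h₁, rootRadius, if_pos h₂]
    gcongr
  · rw [rootRadius, if_neg h₁]
    exact sqrt_le_rootRadius τ₂ δ

theorem rho_pow (M : Matrix (Fin 2) (Fin 2) ℝ) {n : ℕ} (hn : 0 < n) : rho (M ^ n) = rho M ^ n :=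
  (congrArg (spectralRadius ℂ) (M.map_pow Complex.ofRealHom n)).trans
    (spectralRadius_pow_of_pos _ hn)

theorem mem_spectrum_map_ofReal_iff (M : Matrix (Fin 2) (Fin 2) ℝ) (z : ℂ) :
    z ∈ spectrum ℂ (M.map Complex.ofReal) ↔ z ^ 2 - M.trace * z + M.det = 0 := by
  have hdet : ((M.det : ℝ) : ℂ) = (M.map Complex.ofReal).det := Complex.ofRealHom.map_det M
  rw [Matrix.mem_spectrum_iff_fin_two, hdet]
  simp [trace]

theorem rho_eq_max_norm_of_vieta (M : Matrix (Fin 2) (Fin 2) ℝ) {z₁ z₂ : ℂ}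
    (hsum : z₁ + z₂ = M.trace) (hprod : z₁ * z₂ = M.det) :
    rho M = ENNReal.ofReal (max ‖z₁‖ ‖z₂‖) := by
  have hspec : spectrum ℂ (M.map Complex.ofReal) = {z₁, z₂} := by
    ext z
    rw [mem_spectrum_map_ofReal_iff, ← hsum, ← hprod,
      show z ^ 2 - (z₁ + z₂) * z + z₁ * z₂ = (z - z₁) * (z - z₂) by ring]
    simp [sub_eq_zero]
  rw [rho, spectralRadius, hspec, iSup_pair, ENNReal.ofReal_max, ofReal_norm, ofReal_norm]
  rfl

theorem rho_eq_rootRadius (M : Matrix (Fin 2) (Fin 2) ℝ) :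
    rho M = ENNReal.ofReal (rootRadius M.trace M.det) := by
  obtain ⟨z₁, z₂, hsum, hprod, hmax⟩ := exists_roots_max_norm_eq_rootRadius M.trace M.det
  rw [rho_eq_max_norm_of_vieta M hsum hprod, hmax]

theorem rho_le_rho_of_abs_trace_le {M N : Matrix (Fin 2) (Fin 2) ℝ} (hdet : M.det = N.det)
    (htr : |M.trace| ≤ |N.trace|) : rho M ≤ rho N := by
  rw [rho_eq_rootRadius, rho_eq_rootRadius, hdet]
  exact ENNReal.ofReal_le_ofReal (rootRadius_le_rootRadius _ htr)

theorem rho_le_max_of_two_mul_trace_sq_eq {M N₁ N₂ N₃ : Matrix (Fin 2) (Fin 2) ℝ}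
    (h₁ : M.det = N₁.det) (h₂ : M.det = N₂.det) (h₃ : M.det = N₃.det)
    (htr : 2 * M.trace ^ 2 = N₃.trace ^ 2 + N₁.trace * N₂.trace) :
    rho M ≤ max (rho N₁) (max (rho N₂) (rho N₃)) := by
  rcases le_max_iff.mp (abs_le_max_of_two_mul_sq_eq htr) with h | h
  · exact le_max_of_le_left (rho_le_rho_of_abs_trace_le h₁ h)
  rcases le_max_iff.mp h with h | h
  · exact le_max_of_le_right (le_max_of_le_left (rho_le_rho_of_abs_trace_le h₂ h))
  · exact le_max_of_le_right (le_max_of_le_right (rho_le_rho_of_abs_trace_le h₃ h))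

/-- For arbitrary real 2×2 matrices `A`, `B`, the normalized
spectral radius of `AABABABB` is at most the maximum of the normalized spectral
radii of `AB`, `AABB` and `AABABBAB`. -/
theorem stmt_16 (A B : Matrix (Fin 2) (Fin 2) ℝ) :
    rho (A * A * B * A * B * A * B * B) ^ ((1 : ℝ) / 8) ≤
      max (rho (A * B) ^ ((1 : ℝ) / 2))
        (max (rho (A * A * B * B) ^ ((1 : ℝ) / 4))
          (rho (A * A * B * A * B * B * A * B) ^ ((1 : ℝ) / 8))) := by
  have hρ : rho (A * A * B * A * B * A * B * B) ≤ max (rho (A * B) ^ 4)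
      (max (rho (A * A * B * B) ^ 2) (rho (A * A * B * A * B * B * A * B))) := by
    rw [← rho_pow _ (by norm_num), ← rho_pow _ (by norm_num)]
    refine rho_le_max_of_two_mul_trace_sq_eq ?_ ?_ ?_ (two_mul_trace_sq_AABABABB A B) <;>
      simp only [det_mul, det_pow] <;> ring
  calc rho (A * A * B * A * B * A * B * B) ^ ((1 : ℝ) / 8)
      ≤ (max (rho (A * B) ^ 4)
          (max (rho (A * A * B * B) ^ 2) (rho (A * A * B * A * B * B * A * B)))) ^ ((1 : ℝ) / 8) :=
        ENNReal.rpow_le_rpow hρ (by norm_num)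
    _ = _ := by
      rw [ENNReal.max_rpow (by norm_num), ENNReal.max_rpow (by norm_num),
        ← ENNReal.rpow_natCast, ← ENNReal.rpow_natCast, ← ENNReal.rpow_mul, ← ENNReal.rpow_mul]
      norm_num
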